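/- arXiv:2603.10050 — 2 statements merged into one kernel-verified Lean document; each statement's English description precedes it below -/
import Mathlib

section
/- Let h be a nonzero real number, let A and B be n×n real matrices, and define the matrix-valued strain field X(s) = A + (s − h/2)·B for s ∈ [0,h]. Then the fourth-order Magnus twist Ω := ∫₀ʰ X(s) ds − (1/h)·⁅∫₀ʰ (s − h/2)·X(s) ds, ∫₀ʰ X(s) ds⁆ (where ⁅·,·⁆ is the matrix commutator ⁅M,N⁆ = MN − NM) satisfies Ω = h·A − (h³/12)·⁅B, A⁆. -/
open intervalIntegral

attribute [local instance] Matrix.normedAddCommGroup Matrix.normedSpace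

/-!
The weight `s - h/2` has mean zero and second moment `h³/12` on `[0, h]`. Hence the strain field
integrates to `h • A` and its first moment to `(h³/12) • B`, and bilinearity of the commutator
turns `(1/h) • ⁅(h³/12) • B, h • A⁆` into `(h³/12) • ⁅B, A⁆`.
-/

section CenteredMoments

variable {E : Type*} [NormedAddCommGroup E] [NormedSpace ℝ E] [CompleteSpace E]

theorem integral_sub_half (h : ℝ) : ∫ s in (0 : ℝ)..h, (s - h / 2) = 0 := by
  rw [integral_comp_sub_right (fun s => s), integral_id]
  ring

theorem integral_sub_half_sq (h : ℝ) : ∫ s in (0 : ℝ)..h, (s - h / 2) ^ 2 = h ^ 3 / 12 := by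
  rw [integral_comp_sub_right (fun s => s ^ 2), integral_pow]
  ring

theorem integral_sub_half_smul (h : ℝ) (v : E) : ∫ s in (0 : ℝ)..h, (s - h / 2) • v = 0 := by
  rw [intervalIntegral.integral_smul_const, integral_sub_half, zero_smul]

theorem integral_sub_half_sq_smul (h : ℝ) (v : E) :
    ∫ s in (0 : ℝ)..h, (s - h / 2) ^ 2 • v = (h ^ 3 / 12) • v := by
  rw [intervalIntegral.integral_smul_const, integral_sub_half_sq]

theorem integral_linear_strain (h : ℝ) (v w : E) :
    ∫ s in (0 : ℝ)..h, (v + (s - h / 2) • w) = h • v := by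
  rw [integral_add intervalIntegrable_const
    (Continuous.intervalIntegrable (by fun_prop) _ _), integral_const,
    integral_sub_half_smul, sub_zero, add_zero]

theorem integral_sub_half_smul_linear_strain (h : ℝ) (v w : E) :
    ∫ s in (0 : ℝ)..h, (s - h / 2) • (v + (s - h / 2) • w) = (h ^ 3 / 12) • w := by
  simp only [smul_add, smul_smul, ← sq]
  rw [integral_add (Continuous.intervalIntegrable (by fun_prop) _ _)
    (Continuous.intervalIntegrable (by fun_prop) _ _), integral_sub_half_smul,
    integral_sub_half_sq_smul, zero_add]

end CenteredMoments

theorem magnus_fourth_order_linear_strain_general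
    {n : ℕ} (h : ℝ) (A B : Matrix (Fin n) (Fin n) ℝ) :
    (∫ s in (0:ℝ)..h, (A + (s - h / 2) • B)) -
      (1 / h) • ⁅∫ s in (0:ℝ)..h, (s - h / 2) • (A + (s - h / 2) • B),
                 ∫ s in (0:ℝ)..h, (A + (s - h / 2) • B)⁆
      = h • A - (h ^ 3 / 12) • ⁅B, A⁆ := by
  rw [integral_linear_strain, integral_sub_half_smul_linear_strain, Ring.lie_def, Ring.lie_def,
    smul_mul_smul_comm, smul_mul_smul_comm, mul_comm h, ← smul_sub, smul_smul]
  congr 2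
  -- at `h = 0` both sides vanish, the junk value `1 / 0 = 0` included
  rcases eq_or_ne h 0 with rfl | hh
  · simp
  · field_simp

/-- **Fourth-order Magnus twist for a linear strain field.**
For `h ≠ 0` and matrices `A`, `B`, with strain field `X s = A + (s - h/2) • B` on `[0, h]`,
the fourth-order Magnus twist
`Ω = ∫₀ʰ X(s) ds − (1/h) • ⁅∫₀ʰ (s − h/2) • X(s) ds, ∫₀ʰ X(s) ds⁆`
equals `h • A − (h³/12) • ⁅B, A⁆`. -/
theorem magnus_fourth_order_linear_strain
    {n : ℕ} (h : ℝ) (hh : h ≠ 0) (A B : Matrix (Fin n) (Fin n) ℝ) :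
    (∫ s in (0:ℝ)..h, (A + (s - h / 2) • B)) -
      (1 / h) • ⁅∫ s in (0:ℝ)..h, (s - h / 2) • (A + (s - h / 2) • B),
                 ∫ s in (0:ℝ)..h, (A + (s - h / 2) • B)⁆
      = h • A - (h ^ 3 / 12) • ⁅B, A⁆ :=
  magnus_fourth_order_linear_strain_general h A B
end

section
/- For u ∈ ℝ³ let û denote the 3×3 skew-symmetric matrix with û·v = u × v for all v ∈ ℝ³ (the hat map), and for κ, ε ∈ ℝ³ let ad(κ,ε) denote the 6×6 real block matrix [[κ̂, 0],[ε̂, κ̂]]. Then for every nonzero real number h and every κ, ε ∈ ℝ³, the 6×6 matrix A = h·I₆ − (h³/12)·ad(κ,ε) has determinant det A = (h³ + (h⁷/144)·‖κ‖²)², which is strictly positive; in particular A is invertible for every h ≠ 0. -/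
open Matrix

/-- The hat map: `hat u` is the 3×3 skew-symmetric matrix with `hat u *ᵥ v = u × v`. -/
def hat (u : Fin 3 → ℝ) : Matrix (Fin 3) (Fin 3) ℝ :=
  !![0, -u 2, u 1; u 2, 0, -u 0; -u 1, u 0, 0]

/-- The adjoint matrix of `(κ, ε) ∈ ℝ³ × ℝ³`: the 6×6 block matrix `[[κ̂, 0], [ε̂, κ̂]]`. -/
def adMat (κ ε : Fin 3 → ℝ) : Matrix (Fin 3 ⊕ Fin 3) (Fin 3 ⊕ Fin 3) ℝ :=
  Matrix.fromBlocks (hat κ) 0 (hat ε) (hat κ)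

/-- **Invertibility of the Magnus operator.**
For `h ≠ 0` and `κ, ε ∈ ℝ³`, the matrix `A = h • I₆ − (h³/12) • ad(κ,ε)` has determinant
`(h³ + (h⁷/144) ‖κ‖²)²`, which is strictly positive; in particular `A` is invertible. -/
theorem magnus_operator_invertible
    (h : ℝ) (hh : h ≠ 0) (κ ε : Fin 3 → ℝ) :
    (h • (1 : Matrix (Fin 3 ⊕ Fin 3) (Fin 3 ⊕ Fin 3) ℝ) - (h ^ 3 / 12) • adMat κ ε).det
        = (h ^ 3 + (h ^ 7 / 144) * ∑ i, κ i ^ 2) ^ 2 ∧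
      0 < (h • (1 : Matrix (Fin 3 ⊕ Fin 3) (Fin 3 ⊕ Fin 3) ℝ) - (h ^ 3 / 12) • adMat κ ε).det ∧
      IsUnit (h • (1 : Matrix (Fin 3 ⊕ Fin 3) (Fin 3 ⊕ Fin 3) ℝ) - (h ^ 3 / 12) • adMat κ ε) := by
  set c : ℝ := h ^ 3 / 12 with hc
  have hblock : h • (1 : Matrix (Fin 3 ⊕ Fin 3) (Fin 3 ⊕ Fin 3) ℝ) - c • adMat κ ε
      = Matrix.fromBlocks (h • 1 - c • hat κ) 0 (-(c • hat ε)) (h • 1 - c • hat κ) := by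
    rw [adMat, ← Matrix.fromBlocks_one, Matrix.fromBlocks_smul, Matrix.fromBlocks_smul,
      sub_eq_add_neg, Matrix.fromBlocks_neg, Matrix.fromBlocks_add]
    simp [sub_eq_add_neg]
  have h3 : (h • (1 : Matrix (Fin 3) (Fin 3) ℝ) - c • hat κ).det
      = h ^ 3 + (h ^ 7 / 144) * ∑ i, κ i ^ 2 := by
    rw [Matrix.one_fin_three, hat]
    simp [Matrix.det_fin_three, Fin.sum_univ_three, hc]
    ring
  have hdet : (h • (1 : Matrix (Fin 3 ⊕ Fin 3) (Fin 3 ⊕ Fin 3) ℝ) - c • adMat κ ε).det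
      = (h ^ 3 + (h ^ 7 / 144) * ∑ i, κ i ^ 2) ^ 2 := by
    rw [hblock, Matrix.det_fromBlocks_zero₁₂, h3, sq]
  have hsum : 0 ≤ ∑ i, κ i ^ 2 := Finset.sum_nonneg fun i _ => sq_nonneg _
  have hne : h ^ 3 + (h ^ 7 / 144) * ∑ i, κ i ^ 2 ≠ 0 := by
    rcases lt_or_gt_of_ne hh with hneg | hpos
    · have h3n : h ^ 3 < 0 := by exact Odd.pow_neg (by decide) hneg
      have h7n : h ^ 7 < 0 := Odd.pow_neg (by decide) hneg
      nlinarith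
    · have h3p : 0 < h ^ 3 := by positivity
      have h7p : 0 ≤ h ^ 7 / 144 * ∑ i, κ i ^ 2 := by positivity
      nlinarith
  have hpos : 0 < (h • (1 : Matrix (Fin 3 ⊕ Fin 3) (Fin 3 ⊕ Fin 3) ℝ) - c • adMat κ ε).det := by
    rw [hdet]; positivity
  exact ⟨hdet, hpos, (Matrix.isUnit_iff_isUnit_det _).mpr (isUnit_iff_ne_zero.mpr hpos.ne')⟩
end
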